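/- Curvature along rays: if (x(t), ξ(t)) is a C¹ solution of ẋ = -√(1 + A cos²(πx)) cos(ξ/2), ξ̇ = -Aπ (sin(2πx)/√(1 + A cos²(πx))) sin(ξ/2), then x is C² and ẍ(t) = -(Aπ/2) sin(2πx(t)). Consequently, |ẍ| is nondecreasing in A ≥ 0 pointwise in x. -/

import Mathlib

/-! With `c := √σ`, the ray system reads `ẋ = -c(x) cos(ξ/2)`, `ξ̇ = 2 c'(x) sin(ξ/2)`.
Differentiating the first equation and substituting the second gives
`ẍ = c c' (cos²(ξ/2) + sin²(ξ/2)) = c c' = σ'/2`, independently of `ξ`.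
For `σ = 1 + A cos²(πx)` this is `-(Aπ/2) sin(2πx)`, whose modulus is linear in `A ≥ 0`. -/

open Real

theorem hasDerivAt_deriv_of_ray {c c' x ξ : ℝ → ℝ} (hc : ∀ y, HasDerivAt c (c' y) y)
    (hx : ∀ t, HasDerivAt x (-c (x t) * cos (ξ t / 2)) t)
    (hξ : ∀ t, HasDerivAt ξ (2 * c' (x t) * sin (ξ t / 2)) t) (t : ℝ) :
    HasDerivAt (deriv x) (c (x t) * c' (x t)) t := by
  have hdx : deriv x = fun t => -c (x t) * cos (ξ t / 2) := funext fun t => (hx t).deriv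
  rw [hdx]
  have hcx : HasDerivAt (fun t => c (x t)) (c' (x t) * (-c (x t) * cos (ξ t / 2))) t :=
    (hc (x t)).comp t (hx t)
  refine (hcx.fun_neg.mul ((hξ t).div_const 2).cos).congr_deriv ?_
  linear_combination c (x t) * c' (x t) * sin_sq_add_cos_sq (ξ t / 2)

theorem hasDerivAt_deriv_of_sqrt_ray {σ σ' x ξ : ℝ → ℝ} (hσ : ∀ y, HasDerivAt σ (σ' y) y)
    (hσ_pos : ∀ y, 0 < σ y)
    (hx : ∀ t, HasDerivAt x (-√(σ (x t)) * cos (ξ t / 2)) t)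
    (hξ : ∀ t, HasDerivAt ξ (σ' (x t) / √(σ (x t)) * sin (ξ t / 2)) t) (t : ℝ) :
    HasDerivAt (deriv x) (σ' (x t) / 2) t := by
  have hc (y : ℝ) : HasDerivAt (fun y => √(σ y)) (σ' y / (2 * √(σ y))) y :=
    (hσ y).sqrt (hσ_pos y).ne'
  have hξ' (t : ℝ) : HasDerivAt ξ (2 * (σ' (x t) / (2 * √(σ (x t)))) * sin (ξ t / 2)) t := by
    convert hξ t using 1
    ring
  convert hasDerivAt_deriv_of_ray hc hx hξ' t using 1
  have hsqrt : √(σ (x t)) ≠ 0 := (sqrt_pos.mpr (hσ_pos (x t))).ne'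
  field_simp

theorem hasDerivAt_one_add_mul_cos_pi_mul_sq (A y : ℝ) :
    HasDerivAt (fun y => 1 + A * cos (π * y) ^ 2) (-(A * π) * sin (2 * π * y)) y := by
  refine (((((hasDerivAt_id y).const_mul π).cos.fun_pow 2).const_mul A).const_add 1).congr_deriv ?_
  rw [mul_assoc 2 π y, sin_two_mul]
  simp only [id, mul_one]
  ring

theorem abs_mul_le_abs_mul_of_le {a b : ℝ} (ha : 0 ≤ a) (hab : a ≤ b) (u : ℝ) :
    |a * u| ≤ |b * u| := by
  rw [abs_mul, abs_mul]
  exact mul_le_mul_of_nonneg_right (abs_le_abs_of_nonneg ha hab) (abs_nonneg u)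

/-- Curvature along rays: if `(x(t), ξ(t))` solves
`ẋ = -√(1 + A cos²(πx)) cos(ξ/2)`, `ξ̇ = -Aπ (sin(2πx)/√(1 + A cos²(πx))) sin(ξ/2)`,
then `x` is twice differentiable with `ẍ = -(Aπ/2) sin(2πx)`; consequently `|ẍ|` is
pointwise nondecreasing in `A ≥ 0`. -/
theorem stmt_12 (A : ℝ) (hA : 0 ≤ A) (x ξ : ℝ → ℝ)
    (hx : ∀ t : ℝ, HasDerivAt x
      (-Real.sqrt (1 + A * Real.cos (Real.pi * x t) ^ 2) * Real.cos (ξ t / 2)) t)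
    (hξ : ∀ t : ℝ, HasDerivAt ξ
      (-(A * Real.pi) * (Real.sin (2 * Real.pi * x t)
          / Real.sqrt (1 + A * Real.cos (Real.pi * x t) ^ 2)) * Real.sin (ξ t / 2)) t) :
    (∀ t : ℝ, HasDerivAt (deriv x)
        (-(A * Real.pi / 2) * Real.sin (2 * Real.pi * x t)) t)
    ∧ ∀ (A₁ A₂ z : ℝ), A₁ ≥ A₂ → A₂ ≥ 0 →
        |-(A₁ * Real.pi / 2) * Real.sin (2 * Real.pi * z)|
          ≥ |-(A₂ * Real.pi / 2) * Real.sin (2 * Real.pi * z)| := by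
  refine ⟨fun t => ?_, fun A₁ A₂ z h₁₂ h₂ => ?_⟩
  · have hσ_pos (y : ℝ) : 0 < 1 + A * cos (π * y) ^ 2 := by positivity
    have hξ' (t : ℝ) : HasDerivAt ξ (-(A * π) * sin (2 * π * x t)
        / √(1 + A * cos (π * x t) ^ 2) * sin (ξ t / 2)) t := by
      simpa only [mul_div_assoc] using hξ t
    convert hasDerivAt_deriv_of_sqrt_ray (hasDerivAt_one_add_mul_cos_pi_mul_sq A) hσ_pos hx hξ' t
      using 1
    ring
  · rw [neg_mul, neg_mul, abs_neg, abs_neg]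
    exact abs_mul_le_abs_mul_of_le (by positivity) (by gcongr) _
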